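/- Let F be a free filter on ℕ (a filter containing every cofinite subset of ℕ), identified with a subset of Cantor space 2^ω. If F is μ-measurable, then F has μ-measure zero. Equivalently, every free filter either is μ-null or is not μ-measurable. -/

import Mathlib

open MeasureTheory

/-- `F` is a filter of subsets of `ℕ`: it contains `ℕ`, is closed under finite (binary)
intersections and under supersets. -/
def IsSetFilter (F : Set (Set ℕ)) : Prop :=
  Set.univ ∈ F ∧ (∀ X ∈ F, ∀ Y ∈ F, X ∩ Y ∈ F) ∧ (∀ X ∈ F, ∀ Y : Set ℕ, X ⊆ Y → Y ∈ F)

/-- A free filter: a proper filter containing every cofinite subset of `ℕ`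
(so every member of `F` is infinite). -/
def IsFreeFilter (F : Set (Set ℕ)) : Prop :=
  IsSetFilter F ∧ ∅ ∉ F ∧ ∀ X : Set ℕ, Xᶜ.Finite → X ∈ F

open scoped Classical in
/-- The characteristic function of `X ⊆ ℕ`, as a point of Cantor space `2^ω = ℕ → Bool`. -/
noncomputable def chi (X : Set ℕ) : ℕ → Bool := fun n => if n ∈ X then true else false

/-- `μ` is the canonical product probability measure on Cantor space (the infinite product
of uniform measures on `{0,1}`, i.e. Haar measure): every cylinder determined by values on
a finite set `s` has measure `(1/2)^|s|`. -/
def IsCantorMeasure (μ : Measure (ℕ → Bool)) : Prop :=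
  ∀ (s : Finset ℕ) (f : ℕ → Bool),
    μ {x : ℕ → Bool | ∀ i ∈ s, x i = f i} = (1 / 2 : ENNReal) ^ s.card

/-!
View `2^ω` as the group `ℕ → Bool` under pointwise xor (the Boolean ring structure of `Bool`).
The Cantor measure is translation invariant, and a free filter `A` is invariant under translation
by every finitely supported `g`, as such a translation changes a set in finitely many places only.
Hence `μ (C ∩ A)` does not depend on the pattern prescribed by a cylinder `C` on its coordinates,
so `μ.restrict A = μ A • μ` and `μ A = μ A * μ A` (Kolmogorov's zero-one law). Translation by
the constant `1` is complementation, which maps `A` to a set disjoint from `A` of the same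
measure; if `A` is measurable this forces `2 μ A ≤ 1`, so `μ A = 0`.
-/

def cantorCyl (s : Finset ℕ) (f : ℕ → Bool) : Set (ℕ → Bool) :=
  {x | ∀ i ∈ s, x i = f i}

section Cylinders

variable {s t : Finset ℕ} {f g x : ℕ → Bool}

@[simp]
lemma mem_cantorCyl : x ∈ cantorCyl s f ↔ ∀ i ∈ s, x i = f i := Iff.rfl

@[simp]
lemma cantorCyl_empty (f : ℕ → Bool) : cantorCyl ∅ f = Set.univ := by
  ext x; simp

lemma cantorCyl_union : cantorCyl (s ∪ t) f = cantorCyl s f ∩ cantorCyl t f := by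
  ext x; simp [or_imp, forall_and]

lemma cantorCyl_eq_of_mem (hx : x ∈ cantorCyl s f) : cantorCyl s x = cantorCyl s f := by
  ext y; simp_all

lemma cantorCyl_insert_eq_inter {i : ℕ} :
    cantorCyl (insert i s) f = cantorCyl s f ∩ {x | x i = f i} := by
  ext x; simp [and_comm]

lemma cantorCyl_insert_update_eq_diff {i : ℕ} (hi : i ∉ s) :
    cantorCyl (insert i s) (Function.update f i (!f i)) = cantorCyl s f \ {x | x i = f i} := by
  ext x
  simp only [mem_cantorCyl, Finset.forall_mem_insert, Function.update_self, Set.mem_sdiff,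
    Set.mem_ofPred_eq, Bool.eq_not]
  rw [and_comm]
  refine and_congr (forall₂_congr fun j hj => ?_) Iff.rfl
  rw [Function.update_of_ne (ne_of_mem_of_not_mem hj hi)]

lemma preimage_add_cantorCyl : (g + ·) ⁻¹' cantorCyl s f = cantorCyl s (-g + f) := by
  ext x; simp [eq_neg_add_iff_add_eq]

lemma measurableSet_cantorCyl (s : Finset ℕ) (f : ℕ → Bool) :
    MeasurableSet (cantorCyl s f) := by
  have : cantorCyl s f = ⋂ i ∈ s, (fun x : ℕ → Bool => x i) ⁻¹' {f i} := by
    ext x; simp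
  rw [this]
  exact .biInter s.countable_toSet fun i _ => measurable_pi_apply i (measurableSet_singleton _)

lemma isPiSystem_cantorCyl : IsPiSystem {S | ∃ s f, S = cantorCyl s f} := by
  rintro _ ⟨s, f, rfl⟩ _ ⟨t, g, rfl⟩ ⟨x, hxs, hxt⟩
  exact ⟨s ∪ t, x, by rw [cantorCyl_union, cantorCyl_eq_of_mem hxs, cantorCyl_eq_of_mem hxt]⟩

lemma generateFrom_cantorCyl :
    MeasurableSpace.pi = MeasurableSpace.generateFrom {S | ∃ s f, S = cantorCyl s f} := by
  refine le_antisymm (iSup_le fun i => Measurable.comap_le ?_) (MeasurableSpace.generateFrom_le ?_)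
  · refine @measurable_to_countable' _ _ _ _ (_) _ fun b => ?_
    refine MeasurableSpace.measurableSet_generateFrom ⟨{i}, fun _ => b, ?_⟩
    ext x; simp
  · rintro _ ⟨s, f, rfl⟩
    exact measurableSet_cantorCyl s f

lemma ext_of_cantorCyl {μ ν : Measure (ℕ → Bool)} [IsFiniteMeasure μ]
    (h : ∀ s f, μ (cantorCyl s f) = ν (cantorCyl s f)) : μ = ν := by
  refine ext_of_generate_finite _ generateFrom_cantorCyl isPiSystem_cantorCyl ?_ ?_
  · rintro _ ⟨s, f, rfl⟩
    exact h s f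
  · simpa using h ∅ 0

end Cylinders

namespace IsCantorMeasure

variable {μ : Measure (ℕ → Bool)} (hμ : IsCantorMeasure μ)
include hμ

lemma measure_cantorCyl (s : Finset ℕ) (f : ℕ → Bool) :
    μ (cantorCyl s f) = (1 / 2 : ENNReal) ^ s.card :=
  hμ s f

lemma isProbabilityMeasure : IsProbabilityMeasure μ :=
  ⟨by simpa using hμ.measure_cantorCyl ∅ 0⟩

lemma isAddLeftInvariant : μ.IsAddLeftInvariant := by
  have := hμ.isProbabilityMeasure
  refine ⟨fun g => ext_of_cantorCyl fun s f => ?_⟩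
  rw [Measure.map_apply (measurable_const_add g) (measurableSet_cantorCyl s f),
    preimage_add_cantorCyl, hμ.measure_cantorCyl, hμ.measure_cantorCyl]

lemma eq_smul_of_measure_cantorCyl_eq {ν : Measure (ℕ → Bool)} [IsFiniteMeasure ν]
    (hν : ∀ s f f', ν (cantorCyl s f) = ν (cantorCyl s f')) : ν = ν Set.univ • μ := by
  -- each new coordinate splits a cylinder into two halves of equal `ν`-measure
  have key : ∀ s f, ν (cantorCyl s f) * 2 ^ s.card = ν Set.univ := by
    intro s
    induction s using Finset.induction_on with
    | empty => simp
    | insert i s hi ih =>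
      intro f
      have halve : ν (cantorCyl s f) = ν (cantorCyl (insert i s) f) * 2 := by
        have hi_meas : MeasurableSet {x : ℕ → Bool | x i = f i} :=
          measurableSet_eq_fun (measurable_pi_apply i) measurable_const
        rw [← measure_inter_add_sdiff (cantorCyl s f) hi_meas,
          ← cantorCyl_insert_eq_inter, ← cantorCyl_insert_update_eq_diff hi,
          hν _ (Function.update f i (!f i)) f, mul_two]
      rw [Finset.card_insert_of_notMem hi, pow_succ, ← mul_assoc, mul_right_comm, ← halve, ih]
  refine ext_of_cantorCyl fun s f => ?_
  rw [Measure.smul_apply, smul_eq_mul, hμ.measure_cantorCyl, ← key s f, mul_assoc, ← mul_pow]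
  simp [ENNReal.mul_inv_cancel]

variable {A : Set (ℕ → Bool)}

lemma measure_cantorCyl_inter_eq_of_add_invariant
    (hA : ∀ g : ℕ → Bool, g.support.Finite → (g + ·) ⁻¹' A = A)
    (s : Finset ℕ) (f f' : ℕ → Bool) :
    μ (cantorCyl s f ∩ A) = μ (cantorCyl s f' ∩ A) := by
  have := hμ.isAddLeftInvariant
  set g := (s : Set ℕ).indicator (f' - f)
  have hg : (g + ·) ⁻¹' (cantorCyl s f' ∩ A) = cantorCyl s f ∩ A := by
    rw [Set.preimage_inter, hA g (s.finite_toSet.subset Set.support_indicator_subset),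
      preimage_add_cantorCyl]
    congr 1
    ext x
    simp +contextual [g]
  rw [← hg, measure_preimage_add]

/-- Kolmogorov's zero-one law, here for the outer measure of an arbitrary invariant set. -/
theorem measure_eq_zero_or_one_of_add_invariant
    (hA : ∀ g : ℕ → Bool, g.support.Finite → (g + ·) ⁻¹' A = A) :
    μ A = 0 ∨ μ A = 1 := by
  have := hμ.isProbabilityMeasure
  have hrestrict : μ.restrict A = μ A • μ := by
    simpa using hμ.eq_smul_of_measure_cantorCyl_eq (ν := μ.restrict A) fun s f f' => by
      simp only [Measure.restrict_apply (measurableSet_cantorCyl _ _)]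
      exact hμ.measure_cantorCyl_inter_eq_of_add_invariant hA s f f'
  have hidem : μ A * μ A = μ A := by
    simpa using (congrArg (· A) hrestrict).symm
  by_contra! h
  exact h.2 ((ENNReal.mul_eq_left h.1 (measure_ne_top μ A)).1 hidem)

end IsCantorMeasure

lemma image_chi (F : Set (Set ℕ)) : chi '' F = {x : ℕ → Bool | {n | x n = true} ∈ F} := by
  have hleft : Function.LeftInverse (fun x : ℕ → Bool => {n | x n = true}) chi := fun X => by
    ext n; simp [chi]
  have hright : Function.RightInverse (fun x : ℕ → Bool => {n | x n = true}) chi := fun x => by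
    funext n; cases h : x n <;> simp [chi, h]
  rw [Set.image_eq_preimage_of_inverse hleft hright]
  rfl

lemma setOf_add_apply_eq_true_symmDiff (g x : ℕ → Bool) :
    symmDiff {n | (g + x) n = true} {n | x n = true} = g.support := by
  ext n
  simp only [Set.mem_symmDiff, Set.mem_ofPred_eq, Pi.add_apply, Function.mem_support]
  cases g n <;> cases x n <;> decide

lemma setOf_one_add_apply_eq_true (x : ℕ → Bool) :
    {n | (1 + x) n = true} = {n | x n = true}ᶜ := by
  ext n
  simp only [Set.mem_ofPred_eq, Set.mem_compl_iff, Pi.add_apply, Pi.one_apply]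
  cases x n <;> decide

namespace IsFreeFilter

variable {F : Set (Set ℕ)} (hF : IsFreeFilter F)
include hF

lemma mem_of_mem_of_finite_symmDiff {X Y : Set ℕ} (hX : X ∈ F) (hXY : (symmDiff X Y).Finite) :
    Y ∈ F := by
  obtain ⟨⟨-, hinter, hsuper⟩, -, hcofinite⟩ := hF
  refine hsuper _ (hinter X hX _ (hcofinite _ (by rwa [compl_compl]))) Y ?_
  rintro n ⟨hnX, hnXY⟩
  by_contra hnY
  exact hnXY (Or.inl ⟨hnX, hnY⟩)

lemma preimage_add_image_chi {g : ℕ → Bool} (hg : g.support.Finite) :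
    (g + ·) ⁻¹' (chi '' F) = chi '' F := by
  ext x
  simp only [image_chi, Set.mem_preimage, Set.mem_ofPred_eq]
  have hfin := setOf_add_apply_eq_true_symmDiff g x ▸ hg
  exact ⟨fun h => hF.mem_of_mem_of_finite_symmDiff h hfin,
    fun h => hF.mem_of_mem_of_finite_symmDiff h (by rwa [symmDiff_comm] at hfin)⟩

lemma disjoint_image_chi_preimage_one_add : Disjoint (chi '' F) ((1 + ·) ⁻¹' (chi '' F)) := by
  obtain ⟨⟨-, hinter, -⟩, hempty, -⟩ := hF
  refine Set.disjoint_left.2 fun x hx hx' => hempty ?_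
  simp only [image_chi, Set.mem_preimage, Set.mem_ofPred_eq, setOf_one_add_apply_eq_true] at hx hx'
  simpa using hinter _ hx _ hx'

end IsFreeFilter

/-- Every free filter on `ℕ` which is `μ`-measurable (identified with a subset of Cantor
space) has `μ`-measure zero: every free filter is either null or non-measurable. -/
theorem free_filter_null_or_nonmeasurable
    (μ : Measure (ℕ → Bool)) (hμ : IsCantorMeasure μ)
    (F : Set (Set ℕ)) (hF : IsFreeFilter F)
    (hmeas : NullMeasurableSet (chi '' F) μ) :
    μ (chi '' F) = 0 := by
  have := hμ.isProbabilityMeasure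
  have := hμ.isAddLeftInvariant
  have htwice : μ (chi '' F) + μ (chi '' F) ≤ 1 := by
    calc μ (chi '' F) + μ (chi '' F) = μ (chi '' F) + μ ((1 + ·) ⁻¹' (chi '' F)) := by
          rw [measure_preimage_add]
      _ = μ (chi '' F ∪ (1 + ·) ⁻¹' (chi '' F)) :=
          (measure_union₀' hmeas hF.disjoint_image_chi_preimage_one_add.aedisjoint).symm
      _ ≤ 1 := prob_le_one
  refine (hμ.measure_eq_zero_or_one_of_add_invariant
    fun g hg => hF.preimage_add_image_chi hg).resolve_right fun h => ?_
  rw [h] at htwice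
  norm_num at htwice
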